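/- arXiv:1607.05933 — 4 statements merged into one kernel-verified Lean document; each statement's English description precedes it below -/
import Mathlib

section
/- Let d ≥ 1 be an integer, let F ⊆ ℝ^d be a universal differentiability set, and let A be a relatively closed subset of F (i.e., A = F ∩ C for some closed set C ⊆ ℝ^d). Then either A is a universal differentiability set or F \ A is a universal differentiability set. -/
open Metric Set Filter

/-- A set `S ⊆ ℝ^d` is a universal differentiability set (UDS) if every Lipschitz
function `f : ℝ^d → ℝ` is differentiable at at least one point of `S`. -/
def IsUDS (d : ℕ) (S : Set (EuclideanSpace ℝ (Fin d))) : Prop :=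
  ∀ f : EuclideanSpace ℝ (Fin d) → ℝ, (∃ K : NNReal, LipschitzWith K f) →
    ∃ x ∈ S, DifferentiableAt ℝ f x

/-- The kernel `K(S) = S \ {x ∈ S : ∃ ε > 0, B(x,ε) ∩ S is a non-UDS}`. -/
def kernelUDS (d : ℕ) (S : Set (EuclideanSpace ℝ (Fin d))) :
    Set (EuclideanSpace ℝ (Fin d)) :=
  S \ {x | x ∈ S ∧ ∃ ε > 0, ¬ IsUDS d (Metric.ball x ε ∩ S)}

/-- A box in `ℝ^d` is a product of closed bounded intervals. -/
def IsBox (d : ℕ) (U : Set (EuclideanSpace ℝ (Fin d))) : Prop :=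
  ∃ a b : Fin d → ℝ,
    U = {x : EuclideanSpace ℝ (Fin d) | ∀ i, x i ∈ Set.Icc (a i) (b i)}

/-- Distance between two sets, with the convention `dist(A, ∅) = 1`. -/
noncomputable def setDist {α : Type*} [PseudoMetricSpace α] (A B : Set α) : ℝ :=
  haveI := Classical.propDecidable B.Nonempty
  if B.Nonempty then sInf {r : ℝ | ∃ a ∈ A, ∃ b ∈ B, r = dist a b} else 1

/-- The smallest Lipschitz constant of `f`. -/
noncomputable def lipConst {α : Type*} [PseudoMetricSpace α] (f : α → ℝ) : NNReal :=
  sInf {K : NNReal | LipschitzWith K f}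

/-! If `A = F ∩ C` is not a UDS, fix a Lipschitz `f` differentiable at no point of `A`, and
let `g` be any Lipschitz function. We build a Lipschitz `u` that is differentiable off `C`
and such that `u - (f - g)` is differentiable at every point of `C`. Since `F` is a UDS,
`g + u` is differentiable at some `x ∈ F`. If `x ∈ C`, then `f = (g + u) - (u - (f - g))`
would be differentiable at `x ∈ A`; hence `x ∈ F \ A`, and `g = (g + u) - u` is
differentiable there.

The function `u` is a Whitney-type smoothing of `w = f - g` away from `C`: with `s` a smooth
Lipschitz function vanishing exactly on `C`, `θₖ` a dyadic partition of unity on `(0, 1]`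
(`θₖ(t) ≠ 0` only for `t ≈ 2⁻ᵏ`) and `Wₖ` smooth `K`-Lipschitz mollifications of `w` with
`|Wₖ - w| ≤ K 2⁻ᵏ`, put `u = w + ∑ₖ θₖ(s) (Wₖ - w)`. Off `C` this is a finite sum of smooth
functions. Near `C` one has `|u - w| ≤ 6 K s = o(‖y - x‖)`, because `s` is smooth and has a
minimum at each point of `C`; so `u - w` has derivative `0` there. The scales match so that
`u` stays Lipschitz: `θₖ(s)` has slope `O(2ᵏ)` while `|Wₖ - w| = O(2⁻ᵏ)`.
-/

open scoped Topology NNReal ContDiff Convolution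

open MeasureTheory

theorem LipschitzWith.tsum {ι α F : Type*} [PseudoMetricSpace α] [NormedAddCommGroup F]
    [CompleteSpace F] {f : ι → α → F} {K : ι → ℝ≥0} (hf : ∀ j, LipschitzWith (K j) (f j))
    (hK : Summable K) (hsum : ∀ x, Summable fun j => f j x) :
    LipschitzWith (∑' j, K j) fun x => ∑' j, f j x := by
  refine LipschitzWith.of_dist_le_mul fun x y => ?_
  have hle : ∀ j, ‖f j x - f j y‖ ≤ K j * dist x y := fun j => by
    simpa [dist_eq_norm] using (hf j).dist_le_mul x y
  have hKd : Summable fun j => (K j : ℝ) * dist x y := (NNReal.summable_coe.mpr hK).mul_right _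
  rw [dist_eq_norm, ← (hsum x).tsum_sub (hsum y), NNReal.coe_tsum, ← tsum_mul_right]
  exact tsum_of_norm_bounded hKd.hasSum hle

lemma tsum_half_pow_succ : ∑' j : ℕ, (2⁻¹ : ℝ≥0) ^ (j + 1) = 1 := by
  simp_rw [pow_succ]
  rw [NNReal.tsum_mul_right, NNReal.tsum_geometric (by norm_num)]
  apply NNReal.coe_injective
  rw [NNReal.coe_mul, NNReal.coe_inv, NNReal.coe_sub (by norm_num)]
  norm_num

lemma abs_tsum_le_card_mul {ι : Type*} {v : ι → ℝ} {S : Finset ι} {B : ℝ}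
    (hS : ∀ k, v k ≠ 0 → k ∈ S) (hB : ∀ k, |v k| ≤ B) : |∑' k, v k| ≤ S.card * B := by
  rw [tsum_eq_sum fun k hk => by_contra fun h => hk (hS k h)]
  calc |∑ k ∈ S, v k| ≤ ∑ k ∈ S, |v k| := Finset.abs_sum_le_sum_abs _ _
    _ ≤ S.card * B := by simpa using Finset.sum_le_card_nsmul S _ B fun k _ => hB k

theorem hasFDerivAt_zero_of_norm_le {E F : Type*} [NormedAddCommGroup E] [NormedSpace ℝ E]
    [NormedAddCommGroup F] [NormedSpace ℝ F] {f : E → F} {s : E → ℝ} {x : E}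
    (hs : DifferentiableAt ℝ s x) (hsx : s x = 0) (hf : ∀ y, ‖f y‖ ≤ s y) :
    HasFDerivAt f (0 : E →L[ℝ] F) x := by
  have hmin : IsLocalMin s x :=
    Eventually.of_forall fun y => hsx ▸ (norm_nonneg _).trans (hf y)
  have hs_o : s =o[𝓝 x] fun y => y - x := by
    simpa [hsx, hmin.fderiv_eq_zero] using hs.hasFDerivAt.isLittleO
  have hfx : f x = 0 := norm_le_zero_iff.mp (hsx ▸ hf x)
  refine HasFDerivAt.of_isLittleO ?_
  simp only [hfx, sub_zero, FunLike.coe_zero, Pi.zero_apply]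
  have hf_O : f =O[𝓝 x] s :=
    Asymptotics.IsBigO.of_bound' (Eventually.of_forall fun y => (hf y).trans (le_abs_self _))
  exact hf_O.trans_isLittleO hs_o

section Mollification

variable {E F : Type*} [NormedAddCommGroup E] [NormedSpace ℝ E] [FiniteDimensional ℝ E]
  [NormedAddCommGroup F] [NormedSpace ℝ F]

theorem ContDiffBump.lipschitzWith_normed_convolution [MeasurableSpace E] [BorelSpace E]
    {μ : Measure E} [μ.IsAddHaarMeasure] (φ : ContDiffBump (0 : E)) {K : ℝ≥0} {f : E → F}
    (hf : LipschitzWith K f) :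
    LipschitzWith K (φ.normed μ ⋆[ContinuousLinearMap.lsmul ℝ ℝ, μ] f) := by
  have hconv : ConvolutionExists (φ.normed μ) f (ContinuousLinearMap.lsmul ℝ ℝ) μ :=
    φ.hasCompactSupport_normed.convolutionExists_left_of_continuous_right _
      (φ.continuous_normed.locallyIntegrable) hf.continuous
  refine LipschitzWith.of_dist_le_mul fun x y => ?_
  rw [dist_eq_norm, convolution_def, convolution_def, ← integral_sub (hconv x) (hconv y)]
  simp only [ContinuousLinearMap.lsmul_apply]
  calc ‖∫ t, (φ.normed μ t • f (x - t) - φ.normed μ t • f (y - t)) ∂μ‖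
      ≤ ∫ t, φ.normed μ t * (K * ‖x - y‖) ∂μ := by
        refine norm_integral_le_of_norm_le (φ.integrable_normed.mul_const _)
          (Eventually.of_forall fun t => ?_)
        rw [← smul_sub, norm_smul, Real.norm_of_nonneg (φ.nonneg_normed t)]
        gcongr
        · exact φ.nonneg_normed t
        · simpa [dist_eq_norm] using hf.dist_le_mul (x - t) (y - t)
    _ = K * dist x y := by rw [integral_mul_const, φ.integral_normed, one_mul, dist_eq_norm]

theorem LipschitzWith.exists_contDiff_lipschitzWith_dist_le [CompleteSpace F] {K : ℝ≥0}
    {f : E → F} (hf : LipschitzWith K f) {ε : ℝ} (hε : 0 < ε) :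
    ∃ g : E → F, ContDiff ℝ ∞ g ∧ LipschitzWith K g ∧ ∀ x, dist (g x) (f x) ≤ K * ε := by
  borelize E
  let φ : ContDiffBump (0 : E) := ⟨ε / 2, ε, half_pos hε, half_lt_self hε⟩
  refine ⟨φ.normed .addHaar ⋆[ContinuousLinearMap.lsmul ℝ ℝ, .addHaar] f,
    φ.hasCompactSupport_normed.contDiff_convolution_left _ φ.contDiff_normed
      hf.continuous.locallyIntegrable,
    φ.lipschitzWith_normed_convolution hf,
    fun x => φ.dist_normed_convolution_le hf.continuous.aestronglyMeasurable fun y hy => ?_⟩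
  exact (hf.dist_le_mul y x).trans (by gcongr; exact (mem_ball.mp hy).le)

end Mollification

theorem exists_pos_tsum_mul_lipschitzWith_one {E : Type*} [NormedAddCommGroup E]
    [NormedSpace ℝ E] {b : ℕ → E → ℝ} (hb_diff : ∀ j, Differentiable ℝ (b j))
    (hb_lip : ∀ j, ∃ M, LipschitzWith M (b j)) (hb0 : ∀ j y, 0 ≤ b j y) (hb1 : ∀ j y, b j y ≤ 1) :
    ∃ c : ℕ → ℝ, (∀ j, 0 < c j) ∧ (∀ y, Summable fun j => c j * b j y) ∧
      LipschitzWith 1 (fun y => ∑' j, c j * b j y) ∧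
      Differentiable ℝ (fun y => ∑' j, c j * b j y) ∧ ∀ y, ∑' j, c j * b j y ≤ 1 := by
  choose M hM using hb_lip
  let c : ℕ → ℝ≥0 := fun j => (2⁻¹ : ℝ≥0) ^ (j + 1) / (1 + M j)
  let f : ℕ → E → ℝ := fun j y => (c j : ℝ) * b j y
  have hc_le : ∀ j, c j ≤ (2⁻¹ : ℝ≥0) ^ (j + 1) := fun j =>
    div_le_self zero_le (le_add_of_nonneg_right zero_le)
  have hcM_le : ∀ j, c j * M j ≤ (2⁻¹ : ℝ≥0) ^ (j + 1) := fun j => by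
    rw [div_mul_eq_mul_div, mul_div_assoc]
    exact mul_le_of_le_one_right zero_le (div_le_one_of_le₀ (by simp) zero_le)
  have hf_lip : ∀ j, LipschitzWith ((2⁻¹ : ℝ≥0) ^ (j + 1)) (f j) := fun j => by
    have := (lipschitzWith_smul (c j : ℝ)).comp (hM j)
    rw [NNReal.nnnorm_eq] at this
    exact this.weaken (hcM_le j)
  have hf_nonneg : ∀ j y, 0 ≤ f j y := fun j y => mul_nonneg (by positivity) (hb0 j y)
  have hf_le : ∀ j y, f j y ≤ (2⁻¹ : ℝ≥0) ^ (j + 1) := fun j y => by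
    calc f j y ≤ c j := mul_le_of_le_one_right (by positivity) (hb1 j y)
      _ ≤ _ := by exact_mod_cast hc_le j
  have hsummable : Summable fun j : ℕ => (2⁻¹ : ℝ≥0) ^ (j + 1) :=
    (NNReal.summable_geometric (by norm_num)).mul_right _ |>.congr fun j => (pow_succ _ _).symm
  have hf_summable : ∀ y, Summable fun j => f j y := fun y =>
    (NNReal.summable_coe.mpr hsummable).of_nonneg_of_le (hf_nonneg · y) (hf_le · y)
  refine ⟨fun j => c j, fun j => by positivity, hf_summable,
    tsum_half_pow_succ ▸ LipschitzWith.tsum hf_lip hsummable hf_summable, ?_, fun y => ?_⟩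
  · exact differentiable_tsum (NNReal.summable_coe.mpr hsummable)
      (fun j y => ((hb_diff j).const_mul _ y).hasFDerivAt)
      fun j y => norm_fderiv_le_of_lipschitz ℝ (hf_lip j)
  · calc ∑' j, f j y ≤ ∑' j, ((2⁻¹ : ℝ≥0) ^ (j + 1) : ℝ) :=
          (hf_summable y).tsum_le_tsum (hf_le · y) (NNReal.summable_coe.mpr hsummable)
      _ = 1 := by exact_mod_cast tsum_half_pow_succ

theorem IsClosed.exists_lipschitzWith_differentiable_zero_iff {E : Type*} [NormedAddCommGroup E]
    [NormedSpace ℝ E] [FiniteDimensional ℝ E] {C : Set E} (hC : IsClosed C) :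
    ∃ s : E → ℝ, LipschitzWith 1 s ∧ Differentiable ℝ s ∧ (∀ x, 0 ≤ s x) ∧ (∀ x, s x ≤ 1) ∧
      ∀ x, s x = 0 ↔ x ∈ C := by
  rcases C.eq_empty_or_nonempty with rfl | hCne
  · exact ⟨fun _ => 1, LipschitzWith.const' 1, differentiable_const 1, fun _ => zero_le_one,
      fun _ => le_rfl, by simp⟩
  rcases Cᶜ.eq_empty_or_nonempty with hCc | hCc
  · exact ⟨0, LipschitzWith.const' 0, differentiable_const 0, fun _ => le_rfl,
      fun _ => zero_le_one, fun x => by simp [compl_empty_iff.mp hCc]⟩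
  have : Nonempty (Cᶜ : Set E) := hCc.to_subtype
  obtain ⟨x, hx⟩ := TopologicalSpace.exists_dense_seq (Cᶜ : Set E)
  have hd : ∀ j, 0 < infDist (x j : E) C := fun j => (hC.notMem_iff_infDist_pos hCne).mp (x j).2
  let b : ∀ j, ContDiffBump (x j : E) := fun j =>
    ⟨infDist (x j : E) C / 4, infDist (x j : E) C / 2, by linarith [hd j], by linarith [hd j]⟩
  obtain ⟨c, hc_pos, hsummable, hlip, hdiff, hle⟩ := exists_pos_tsum_mul_lipschitzWith_one
    (fun j => ((b j).contDiff (n := 1)).differentiable one_ne_zero)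
    (fun j => (b j).contDiff.lipschitzWith_of_hasCompactSupport (b j).hasCompactSupport
      (n := 1) one_ne_zero)
    (fun j _ => (b j).nonneg) fun j _ => (b j).le_one
  have hterm_nonneg : ∀ j y, 0 ≤ c j * b j y := fun j _ => mul_nonneg (hc_pos j).le (b j).nonneg
  refine ⟨_, hlip, hdiff, fun y => tsum_nonneg (hterm_nonneg · y), hle, fun y => ⟨?_, ?_⟩⟩
  · intro hsy
    by_contra hy
    have hδ : 0 < infDist y C := (hC.notMem_iff_infDist_pos hCne).mp hy
    -- some `x j` is `δ / 8`-close to `y`, so its bump is `1` on a ball around `x j` of radius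
    -- `infDist (x j) C / 4 ≥ 7 δ / 32` that contains `y`, where `δ = infDist y C`
    obtain ⟨j, hj⟩ := Metric.denseRange_iff.mp hx ⟨y, hy⟩ (infDist y C / 8) (by positivity)
    rw [Subtype.dist_eq] at hj
    have hdj : infDist y C ≤ infDist (x j : E) C + dist y (x j) := infDist_le_infDist_add_dist
    have hbj : b j y = 1 := (b j).one_of_mem_closedBall <| mem_closedBall.mpr <| by
      change dist y (x j) ≤ infDist (x j : E) C / 4
      linarith
    have hpos : 0 < c j * b j y := by rw [hbj, mul_one]; exact hc_pos j
    linarith [(hsummable y).tsum_pos (hterm_nonneg · y) j hpos]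
  · intro hy
    have hbj : ∀ j, b j y = 0 := fun j => (b j).zero_of_le_dist <| by
      change infDist (x j : E) C / 2 ≤ dist y (x j)
      linarith [infDist_le_dist_of_mem (x := (x j : E)) hy, dist_comm y (x j : E), hd j]
    simp [hbj]

noncomputable def dyadicCutoff : ContDiffBump (0 : ℝ) := ⟨1, 2, one_pos, one_lt_two⟩

noncomputable def dyadicPiece (k : ℕ) (t : ℝ) : ℝ :=
  dyadicCutoff (2 ^ k * t) - dyadicCutoff (2 ^ (k + 1) * t)

lemma dyadicCutoff_of_abs_le_one {t : ℝ} (ht : |t| ≤ 1) : dyadicCutoff t = 1 :=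
  dyadicCutoff.one_of_mem_closedBall <| by
    change dist t 0 ≤ 1
    rwa [Real.dist_eq, sub_zero]

lemma dyadicCutoff_of_two_le {t : ℝ} (ht : 2 ≤ t) : dyadicCutoff t = 0 :=
  dyadicCutoff.zero_of_le_dist (by simpa [Real.dist_eq, abs_of_nonneg (by linarith : (0:ℝ) ≤ t)])

lemma abs_dyadicPiece_le_one (k : ℕ) (t : ℝ) : |dyadicPiece k t| ≤ 1 := by
  rw [dyadicPiece, abs_le]
  constructor <;> linarith [dyadicCutoff.nonneg (x := 2 ^ k * t),
    dyadicCutoff.le_one (x := 2 ^ k * t), dyadicCutoff.nonneg (x := 2 ^ (k + 1) * t),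
    dyadicCutoff.le_one (x := 2 ^ (k + 1) * t)]

lemma contDiff_dyadicPiece (k : ℕ) : ContDiff ℝ ∞ (dyadicPiece k) :=
  (dyadicCutoff.contDiff.comp (contDiff_const.mul contDiff_id)).sub
    (dyadicCutoff.contDiff.comp (contDiff_const.mul contDiff_id))

lemma exists_lipschitzWith_dyadicPiece :
    ∃ M : ℝ≥0, ∀ k, LipschitzWith (M * 2 ^ k) (dyadicPiece k) := by
  obtain ⟨L, hL⟩ := dyadicCutoff.contDiff.lipschitzWith_of_hasCompactSupport
    dyadicCutoff.hasCompactSupport (n := 1) one_ne_zero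
  refine ⟨3 * L, fun k => LipschitzWith.of_dist_le_mul fun t t' => ?_⟩
  have h : ∀ n : ℕ,
      dist (dyadicCutoff (2 ^ n * t)) (dyadicCutoff (2 ^ n * t')) ≤ L * 2 ^ n * dist t t' :=
    fun n => calc
      _ ≤ L * dist (2 ^ n * t) (2 ^ n * t') := hL.dist_le_mul _ _
      _ = L * 2 ^ n * dist t t' := by
        rw [Real.dist_eq, Real.dist_eq, ← mul_sub, abs_mul, abs_of_pos (by positivity)]; ring
  calc dist (dyadicPiece k t) (dyadicPiece k t')
      ≤ dist (dyadicCutoff (2 ^ k * t)) (dyadicCutoff (2 ^ k * t'))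
        + dist (dyadicCutoff (2 ^ (k + 1) * t)) (dyadicCutoff (2 ^ (k + 1) * t')) :=
        dist_sub_sub_le _ _ _ _
    _ ≤ L * 2 ^ k * dist t t' + L * 2 ^ (k + 1) * dist t t' := add_le_add (h k) (h (k + 1))
    _ = ↑(3 * L * 2 ^ k) * dist t t' := by push_cast; ring

lemma dyadicPiece_ne_zero {k : ℕ} {t : ℝ} (ht : 0 ≤ t) (hk : dyadicPiece k t ≠ 0) :
    1 < 2 ^ (k + 1) * t ∧ 2 ^ k * t < 2 := by
  have hmono : 2 ^ k * t ≤ 2 ^ (k + 1) * t := by gcongr <;> norm_num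
  constructor
  · by_contra! h
    have h0 : 0 ≤ 2 ^ k * t := by positivity
    rw [dyadicPiece, dyadicCutoff_of_abs_le_one (abs_le.mpr ⟨by linarith, by linarith⟩),
      dyadicCutoff_of_abs_le_one (abs_le.mpr ⟨by linarith, h⟩), sub_self] at hk
    exact hk rfl
  · by_contra! h
    exact hk (by
      rw [dyadicPiece, dyadicCutoff_of_two_le h, dyadicCutoff_of_two_le (h.trans hmono), sub_zero])

lemma sum_range_dyadicPiece (N : ℕ) (t : ℝ) :
    ∑ k ∈ Finset.range N, dyadicPiece k t = dyadicCutoff t - dyadicCutoff (2 ^ N * t) := by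
  simpa [dyadicPiece] using Finset.sum_range_sub' (fun k => dyadicCutoff (2 ^ k * t)) N

lemma le_succ_of_dyadicPiece_ne_zero {k k' : ℕ} {t : ℝ} (ht : 0 ≤ t) (hk : dyadicPiece k t ≠ 0)
    (hk' : dyadicPiece k' t ≠ 0) : k' ≤ k + 1 := by
  have h1 := (dyadicPiece_ne_zero ht hk).1
  have h2 := (dyadicPiece_ne_zero ht hk').2
  have : (2 : ℝ) ^ k' < 2 ^ (k + 2) := by
    refine lt_of_mul_lt_mul_right ?_ ht
    calc _ < 2 := h2
      _ < 2 * (2 ^ (k + 1) * t) := by linarith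
      _ = _ := by ring
  have := (pow_lt_pow_iff_right₀ one_lt_two).mp this
  omega

lemma exists_finset_dyadicPiece_ne_zero {t : ℝ} (ht : 0 ≤ t) :
    ∃ S : Finset ℕ, S.card ≤ 3 ∧ ∀ k, dyadicPiece k t ≠ 0 → k ∈ S := by
  by_cases h : ∃ n, dyadicPiece n t ≠ 0
  · obtain ⟨n, hn⟩ := h
    refine ⟨Finset.Icc (n - 1) (n + 1), by simp; omega, fun k hk => ?_⟩
    have := le_succ_of_dyadicPiece_ne_zero ht hn hk
    have := le_succ_of_dyadicPiece_ne_zero ht hk hn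
    rw [Finset.mem_Icc]; omega
  · push Not at h
    exact ⟨∅, by simp, fun k hk => absurd (h k) hk⟩

lemma exists_finset_dyadicPiece_mul_ne_zero {t : ℝ} (ht : 0 ≤ t) (a : ℕ → ℝ) :
    ∃ S : Finset ℕ, S.card ≤ 3 ∧ ∀ k, dyadicPiece k t * a k ≠ 0 → k ∈ S := by
  obtain ⟨S, hcard, hS⟩ := exists_finset_dyadicPiece_ne_zero ht
  exact ⟨S, hcard, fun k hk => hS k (left_ne_zero_of_mul hk)⟩

lemma abs_dyadicPiece_mul_le {k : ℕ} {t a : ℝ} {K : ℝ≥0} (ht : 0 ≤ t)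
    (ha : |a| ≤ K * (2 ^ k)⁻¹) : |dyadicPiece k t * a| ≤ 2 * K * t := by
  by_cases hk : dyadicPiece k t = 0
  · simp only [hk, zero_mul, abs_zero]
    positivity
  have hscale : (2 ^ k : ℝ)⁻¹ ≤ 2 * t := by
    rw [inv_le_iff_one_le_mul₀ (by positivity)]
    have := (dyadicPiece_ne_zero ht hk).1
    rw [pow_succ] at this
    linarith
  calc |dyadicPiece k t * a| = |dyadicPiece k t| * |a| := abs_mul _ _
    _ ≤ 1 * (K * (2 ^ k)⁻¹) := by gcongr; exact abs_dyadicPiece_le_one k _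
    _ = K * (2 ^ k)⁻¹ := one_mul _
    _ ≤ K * (2 * t) := by gcongr
    _ = 2 * K * t := by ring

lemma abs_dyadicPiece_mul_sub_le {k : ℕ} {t t' a a' D : ℝ} {K M : ℝ≥0}
    (hθ : LipschitzWith (M * 2 ^ k) (dyadicPiece k)) (ht : |t - t'| ≤ D)
    (ha : |a| ≤ K * (2 ^ k)⁻¹) (haa' : |a - a'| ≤ 2 * K * D) :
    |dyadicPiece k t * a - dyadicPiece k t' * a'| ≤ (M * K + 2 * K) * D := by
  have hD : 0 ≤ D := (abs_nonneg _).trans ht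
  have hθt : |dyadicPiece k t - dyadicPiece k t'| ≤ M * 2 ^ k * D := by
    have := hθ.dist_le_mul t t'
    rw [Real.dist_eq, Real.dist_eq] at this
    push_cast at this
    exact this.trans (by gcongr)
  calc |dyadicPiece k t * a - dyadicPiece k t' * a'|
      = |(dyadicPiece k t - dyadicPiece k t') * a + dyadicPiece k t' * (a - a')| := by ring_nf
    _ ≤ |dyadicPiece k t - dyadicPiece k t'| * |a| + |dyadicPiece k t'| * |a - a'| := by
        rw [← abs_mul, ← abs_mul]; exact abs_add_le _ _
    _ ≤ (M * 2 ^ k * D) * (K * (2 ^ k)⁻¹) + 1 * (2 * K * D) :=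
        add_le_add (mul_le_mul hθt ha (abs_nonneg _) (by positivity))
          (mul_le_mul (abs_dyadicPiece_le_one k _) haa' (abs_nonneg _) zero_le_one)
    _ = (M * K + 2 * K) * D := by field_simp

section WhitneyGlue

variable {E : Type*}

-- Written as a correction of `w` so that it is visibly `w` on the zero set of `s`; where `s > 0`
-- the pieces sum to one and it is the locally finite sum `∑ θₖ(s) Wₖ` (`whitneyGlue_eq_sum`).
noncomputable def whitneyGlue (s : E → ℝ) (W : ℕ → E → ℝ) (w : E → ℝ) (x : E) : ℝ :=
  w x + ∑' k, dyadicPiece k (s x) * (W k x - w x)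

lemma abs_whitneyGlue_sub_le {s : E → ℝ} {W : ℕ → E → ℝ} {w : E → ℝ} {K : ℝ≥0}
    (hs : ∀ x, 0 ≤ s x) (hW : ∀ k x, |W k x - w x| ≤ K * (2 ^ k)⁻¹) (x : E) :
    |whitneyGlue s W w x - w x| ≤ 6 * K * s x := by
  obtain ⟨S, hcard, hS⟩ := exists_finset_dyadicPiece_mul_ne_zero (hs x) fun k => W k x - w x
  rw [whitneyGlue, add_sub_cancel_left]
  calc |∑' k, dyadicPiece k (s x) * (W k x - w x)| ≤ S.card * (2 * K * s x) :=
        abs_tsum_le_card_mul hS fun k => abs_dyadicPiece_mul_le (hs x) (hW k x)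
    _ ≤ 3 * (2 * K * s x) := by
        have := hs x
        gcongr
        exact_mod_cast hcard
    _ = 6 * K * s x := by ring

lemma whitneyGlue_eq_sum {s : E → ℝ} (W : ℕ → E → ℝ) (w : E → ℝ) {x : E} {N : ℕ}
    (hs1 : s x ≤ 1) (hN : (2 ^ N : ℝ)⁻¹ < s x) :
    whitneyGlue s W w x = ∑ k ∈ Finset.range (N + 1), dyadicPiece k (s x) * W k x := by
  have hpos : 0 < s x := lt_trans (by positivity) hN
  have htwo : 2 ≤ 2 ^ (N + 1) * s x := by
    rw [inv_lt_iff_one_lt_mul₀ (by positivity)] at hN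
    rw [pow_succ]
    linarith
  have htail : ∀ k ∉ Finset.range (N + 1), dyadicPiece k (s x) * (W k x - w x) = 0 := by
    intro k hk
    rw [Finset.mem_range, not_lt] at hk
    suffices dyadicPiece k (s x) = 0 by rw [this, zero_mul]
    by_contra h
    have : (2 : ℝ) ^ (N + 1) * s x ≤ 2 ^ k * s x := by gcongr; norm_num
    linarith [(dyadicPiece_ne_zero hpos.le h).2]
  have hsum : ∑ k ∈ Finset.range (N + 1), dyadicPiece k (s x) = 1 := by
    rw [sum_range_dyadicPiece, dyadicCutoff_of_abs_le_one (abs_le.mpr ⟨by linarith, hs1⟩),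
      dyadicCutoff_of_two_le htwo, sub_zero]
  rw [whitneyGlue, tsum_eq_sum htail]
  simp only [mul_sub, Finset.sum_sub_distrib, ← Finset.sum_mul, hsum]
  ring

lemma lipschitzWith_whitneyGlue [PseudoMetricSpace E] {s : E → ℝ} {W : ℕ → E → ℝ} {w : E → ℝ}
    {K M : ℝ≥0} (hθ : ∀ k, LipschitzWith (M * 2 ^ k) (dyadicPiece k)) (hs : LipschitzWith 1 s)
    (hs0 : ∀ x, 0 ≤ s x) (hW : ∀ k, LipschitzWith K (W k)) (hw : LipschitzWith K w)
    (hWw : ∀ k x, |W k x - w x| ≤ K * (2 ^ k)⁻¹) :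
    LipschitzWith (K + 6 * (M * K + 2 * K)) (whitneyGlue s W w) := by
  refine LipschitzWith.of_dist_le_mul fun x y => ?_
  set v : E → ℕ → ℝ := fun z k => dyadicPiece k (s z) * (W k z - w z)
  have hterm : ∀ k, |v x k - v y k| ≤ (M * K + 2 * K) * dist x y := fun k => by
    have h1 := (hW k).dist_le_mul x y
    have h2 := hw.dist_le_mul x y
    rw [Real.dist_eq] at h1 h2
    refine abs_dyadicPiece_mul_sub_le (hθ k) ?_ (hWw k x) ?_
    · simpa [Real.dist_eq] using hs.dist_le_mul x y
    · calc _ = |(W k x - W k y) - (w x - w y)| := by ring_nf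
        _ ≤ |W k x - W k y| + |w x - w y| := abs_sub _ _
        _ ≤ 2 * K * dist x y := by linarith
  obtain ⟨Sx, hSx, hvx⟩ := exists_finset_dyadicPiece_mul_ne_zero (hs0 x) fun k => W k x - w x
  obtain ⟨Sy, hSy, hvy⟩ := exists_finset_dyadicPiece_mul_ne_zero (hs0 y) fun k => W k y - w y
  have hsupp : ∀ k, v x k - v y k ≠ 0 → k ∈ Sx ∪ Sy := fun k hk => by
    by_contra h
    rw [Finset.mem_union, not_or] at h
    exact hk (by simp only [v, not_imp_comm.mp (hvx k) h.1, not_imp_comm.mp (hvy k) h.2, sub_zero])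
  have hsummable : ∀ (z : E) (S : Finset ℕ), (∀ k, v z k ≠ 0 → k ∈ S) → Summable (v z) :=
    fun z S hS => summable_of_ne_finset_zero fun k hk => by_contra fun h => hk (hS k h)
  have hcard : ((Sx ∪ Sy).card : ℝ) ≤ 6 := by
    have := Finset.card_union_le Sx Sy
    exact_mod_cast (by omega : (Sx ∪ Sy).card ≤ 6)
  have hdiff : whitneyGlue s W w x - whitneyGlue s W w y = (w x - w y) + ∑' k, (v x k - v y k) := by
    rw [whitneyGlue, whitneyGlue, (hsummable x Sx hvx).tsum_sub (hsummable y Sy hvy)]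
    ring
  have hwxy : |w x - w y| ≤ K * dist x y := by simpa [Real.dist_eq] using hw.dist_le_mul x y
  calc dist (whitneyGlue s W w x) (whitneyGlue s W w y)
      ≤ |w x - w y| + |∑' k, (v x k - v y k)| := by rw [Real.dist_eq, hdiff]; exact abs_add_le _ _
    _ ≤ K * dist x y + (Sx ∪ Sy).card * ((M * K + 2 * K) * dist x y) :=
        add_le_add hwxy (abs_tsum_le_card_mul hsupp hterm)
    _ ≤ K * dist x y + 6 * ((M * K + 2 * K) * dist x y) := by gcongr
    _ = ↑(K + 6 * (M * K + 2 * K)) * dist x y := by push_cast; ring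

variable [NormedAddCommGroup E] [NormedSpace ℝ E] {s : E → ℝ} {W : ℕ → E → ℝ} {w : E → ℝ}

lemma differentiableAt_whitneyGlue_of_pos (hs : Differentiable ℝ s) (hs1 : ∀ x, s x ≤ 1)
    (hW : ∀ k, Differentiable ℝ (W k)) {x : E} (hx : 0 < s x) :
    DifferentiableAt ℝ (whitneyGlue s W w) x := by
  obtain ⟨N, hN⟩ := exists_pow_lt_of_lt_one hx (by norm_num : (2⁻¹ : ℝ) < 1)
  rw [inv_pow] at hN
  have hU : ∀ᶠ y in 𝓝 x, (2 ^ N : ℝ)⁻¹ < s y := hs.continuous.continuousAt.eventually_const_lt hN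
  refine DifferentiableAt.congr_of_eventuallyEq ?_
    (hU.mono fun y hy => whitneyGlue_eq_sum W w (hs1 y) hy)
  refine DifferentiableAt.fun_sum fun k _ => DifferentiableAt.mul ?_ (hW k x)
  exact ((contDiff_dyadicPiece k).differentiable (by simp) _).comp x (hs x)

lemma differentiableAt_whitneyGlue_sub {K : ℝ≥0} (hs0 : ∀ x, 0 ≤ s x)
    (hWw : ∀ k x, |W k x - w x| ≤ K * (2 ^ k)⁻¹) {x : E} (hs : DifferentiableAt ℝ s x)
    (hx : s x = 0) : DifferentiableAt ℝ (whitneyGlue s W w - w) x :=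
  (hasFDerivAt_zero_of_norm_le (hs.const_mul (6 * K)) (by simp [hx])
    fun y => by simpa [mul_assoc] using abs_whitneyGlue_sub_le hs0 hWw y).differentiableAt

end WhitneyGlue

theorem LipschitzWith.exists_whitney_smoothing {E : Type*} [NormedAddCommGroup E]
    [NormedSpace ℝ E] [FiniteDimensional ℝ E] {C : Set E} (hC : IsClosed C) {K : ℝ≥0}
    {w : E → ℝ} (hw : LipschitzWith K w) :
    ∃ (u : E → ℝ) (K' : ℝ≥0), LipschitzWith K' u ∧ (∀ x ∉ C, DifferentiableAt ℝ u x) ∧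
      ∀ x ∈ C, DifferentiableAt ℝ (u - w) x := by
  obtain ⟨s, hs_lip, hs_diff, hs0, hs1, hs_zero⟩ := hC.exists_lipschitzWith_differentiable_zero_iff
  choose W hW_smooth hW_lip hW_dist using fun k : ℕ =>
    hw.exists_contDiff_lipschitzWith_dist_le (ε := (2 ^ k)⁻¹) (by positivity)
  have hWw : ∀ k x, |W k x - w x| ≤ K * (2 ^ k)⁻¹ := fun k x => Real.dist_eq _ _ ▸ hW_dist k x
  obtain ⟨M, hM⟩ := exists_lipschitzWith_dyadicPiece
  refine ⟨whitneyGlue s W w, _, lipschitzWith_whitneyGlue hM hs_lip hs0 hW_lip hw hWw,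
    fun x hx => ?_, fun x hx => differentiableAt_whitneyGlue_sub hs0 hWw (hs_diff x)
      ((hs_zero x).mpr hx)⟩
  exact differentiableAt_whitneyGlue_of_pos hs_diff hs1
    (fun k => (hW_smooth k).differentiable (by simp))
    ((hs0 x).lt_of_ne fun h => hx ((hs_zero x).mp h.symm))

theorem stmt_0_general (d : ℕ) (F A : Set (EuclideanSpace ℝ (Fin d)))
    (hF : IsUDS d F) (hA : ∃ C, IsClosed C ∧ A = F ∩ C) :
    IsUDS d A ∨ IsUDS d (F \ A) := by
  obtain ⟨C, hC, rfl⟩ := hA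
  refine or_iff_not_imp_left.mpr fun hA g ⟨Kg, hg⟩ => ?_
  obtain ⟨f, ⟨Kf, hf⟩, hf_nd⟩ : ∃ f : EuclideanSpace ℝ (Fin d) → ℝ,
      (∃ K : ℝ≥0, LipschitzWith K f) ∧ ∀ x ∈ F ∩ C, ¬ DifferentiableAt ℝ f x := by
    simpa [IsUDS] using hA
  obtain ⟨u, Ku, hu, hu_off, hu_on⟩ := (hf.sub hg).exists_whitney_smoothing hC
  obtain ⟨x, hxF, hx⟩ := hF (g + u) ⟨Kg + Ku, hg.add hu⟩
  by_cases hxC : x ∈ C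
  · have hf_eq : g + u - (u - fun y => f y - g y) = f := by
      ext y; simp only [Pi.add_apply, Pi.sub_apply]; ring
    exact absurd (hf_eq ▸ hx.sub (hu_on x hxC)) (hf_nd x ⟨hxF, hxC⟩)
  · exact ⟨x, ⟨hxF, fun h => hxC h.2⟩, add_sub_cancel_right g u ▸ hx.sub (hu_off x hxC)⟩

theorem stmt_0 (d : ℕ) (hd : 1 ≤ d) (F A : Set (EuclideanSpace ℝ (Fin d)))
    (hF : IsUDS d F) (hA : ∃ C, IsClosed C ∧ A = F ∩ C) :
    IsUDS d A ∨ IsUDS d (F \ A) :=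
  stmt_0_general d F A hF hA
end

section
/- Let d ≥ 1 be an integer, let F ⊆ ℝ^d and let A be a relatively closed subset of F. Then there exists a countable collection {U_i}_{i=1}^∞ of boxes in ℝ^d with pairwise disjoint interiors such that F ∩ ⋃_{i=1}^∞ U_i = F \ A and diam(U_i)/dist(U_i, A) → 0 as i → ∞ (with the convention dist(U, ∅) = 1). Furthermore, if {V_i}_{i=1}^∞ is any collection of boxes with pairwise disjoint interiors satisfying F \ A ⊆ F ∩ ⋃_{i=1}^∞ V_i, then the collection {U_i}_{i=1}^∞ can be chosen so that for each index i there exists an index j with U_i ⊆ V_j. -/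
open Metric Set Filter

/-! The complement of the closed set `C` with `A = F ∩ C` is tiled by the maximal dyadic cubes
of side at most `1` whose side is at most their distance to `C` (Whitney cubes); maximality and
the nesting of dyadic cubes make their interiors disjoint. Each Whitney cube `Q` is cut by the
boxes `V j`, and `Q ∩ V j` is cut further by the dyadic grid `e (Q, j)` levels finer than `Q`,
where `e` numbers the pairs `(Q, j)` injectively. A resulting box then has `diam/dist` at most
`√d 2^(-e (Q, j))`, and only finitely many nonempty ones have a given `e (Q, j)`, so in any
enumeration the ratios tend to `0`. For the first statement, take for `V` the unit lattice cubes. -/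

section Boxes

variable {d : ℕ}

lemma isBox_empty (hd : 1 ≤ d) : IsBox d (∅ : Set (EuclideanSpace ℝ (Fin d))) := by
  refine ⟨fun _ => 1, fun _ => 0, (eq_empty_of_forall_notMem fun x hx => ?_).symm⟩
  exact absurd ((hx ⟨0, hd⟩).1.trans (hx ⟨0, hd⟩).2) (by norm_num)

lemma IsBox.inter {U V : Set (EuclideanSpace ℝ (Fin d))} (hU : IsBox d U) (hV : IsBox d V) :
    IsBox d (U ∩ V) := by
  obtain ⟨a, b, rfl⟩ := hU
  obtain ⟨a', b', rfl⟩ := hV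
  refine ⟨a ⊔ a', b ⊓ b', ?_⟩
  ext x
  simp only [mem_inter_iff, mem_ofPred_eq, mem_Icc, Pi.sup_apply, Pi.inf_apply, sup_le_iff,
    le_inf_iff]
  grind

lemma interior_setOf_forall_mem_Icc (a b : Fin d → ℝ) :
    interior {x : EuclideanSpace ℝ (Fin d) | ∀ i, x i ∈ Icc (a i) (b i)} =
      {x | ∀ i, x i ∈ Ioo (a i) (b i)} := by
  have h := (EuclideanSpace.equiv (Fin d) ℝ).toHomeomorph.preimage_interior
    (univ.pi fun i => Icc (a i) (b i))
  rw [interior_pi_set finite_univ] at h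
  simpa [Set.pi, interior_Icc] using h.symm

end Boxes

section Dyadic

def dyadicInterval (n : ℕ) (k : ℤ) : Set ℝ :=
  Icc (k / 2 ^ n) ((k + 1) / 2 ^ n)

def dyadicCube (d n : ℕ) (k : Fin d → ℤ) : Set (EuclideanSpace ℝ (Fin d)) :=
  {x | ∀ i, x i ∈ dyadicInterval n (k i)}

variable {d : ℕ}

lemma mem_dyadicInterval_floor (n : ℕ) (t : ℝ) : t ∈ dyadicInterval n ⌊2 ^ n * t⌋ := by
  have h2 : (0 : ℝ) < 2 ^ n := by positivity
  constructor
  · rw [div_le_iff₀' h2]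
    exact Int.floor_le _
  · rw [le_div_iff₀' h2]
    exact (Int.lt_floor_add_one _).le

lemma dyadic_index_bounds_of_mem_Ioo {n m : ℕ} (hnm : n ≤ m) {k l : ℤ} {t : ℝ}
    (hk : t ∈ Ioo (k / 2 ^ n : ℝ) ((k + 1) / 2 ^ n))
    (hl : t ∈ Ioo (l / 2 ^ m : ℝ) ((l + 1) / 2 ^ m)) :
    k * 2 ^ (m - n) ≤ l ∧ l < (k + 1) * 2 ^ (m - n) := by
  obtain ⟨e, rfl⟩ := Nat.exists_eq_add_of_le hnm
  rw [Nat.add_sub_cancel_left]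
  have hn : (0 : ℝ) < 2 ^ n := by positivity
  have he : (0 : ℝ) < 2 ^ e := by positivity
  rw [mem_Ioo, div_lt_iff₀ hn, lt_div_iff₀ hn] at hk
  rw [mem_Ioo, div_lt_iff₀ (by positivity), lt_div_iff₀ (by positivity), pow_add] at hl
  have h1 : ((k * 2 ^ e : ℤ) : ℝ) < ((l + 1 : ℤ) : ℝ) := by push_cast; nlinarith
  have h2 : ((l : ℤ) : ℝ) < (((k + 1) * 2 ^ e : ℤ) : ℝ) := by push_cast; nlinarith
  exact ⟨Int.lt_add_one_iff.mp (by exact_mod_cast h1), by exact_mod_cast h2⟩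

lemma dyadicInterval_subset {n m : ℕ} (hnm : n ≤ m) {k l : ℤ}
    (hkl : k * 2 ^ (m - n) ≤ l ∧ l < (k + 1) * 2 ^ (m - n)) :
    dyadicInterval m l ⊆ dyadicInterval n k := by
  obtain ⟨e, rfl⟩ := Nat.exists_eq_add_of_le hnm
  rw [Nat.add_sub_cancel_left] at hkl
  have h1 : ((k * 2 ^ e : ℤ) : ℝ) ≤ l := by exact_mod_cast hkl.1
  have h2 : ((l + 1 : ℤ) : ℝ) ≤ (((k + 1) * 2 ^ e : ℤ) : ℝ) := by exact_mod_cast hkl.2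
  push_cast at h1 h2
  intro t ⟨ht1, ht2⟩
  constructor
  · calc (k / 2 ^ n : ℝ) = k * 2 ^ e / 2 ^ (n + e) := by rw [pow_add]; field_simp
      _ ≤ l / 2 ^ (n + e) := by gcongr
      _ ≤ t := ht1
  · calc t ≤ (l + 1) / 2 ^ (n + e) := ht2
      _ ≤ (k + 1) * 2 ^ e / 2 ^ (n + e) := by gcongr
      _ = (k + 1) / 2 ^ n := by rw [pow_add]; field_simp

lemma isBox_dyadicCube (n : ℕ) (k : Fin d → ℤ) : IsBox d (dyadicCube d n k) :=
  ⟨fun i => k i / 2 ^ n, fun i => (k i + 1) / 2 ^ n, rfl⟩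

lemma mem_dyadicCube_floor (n : ℕ) (x : EuclideanSpace ℝ (Fin d)) :
    x ∈ dyadicCube d n (fun i => ⌊2 ^ n * x i⌋) :=
  fun i => mem_dyadicInterval_floor n (x i)

lemma interior_dyadicCube (n : ℕ) (k : Fin d → ℤ) :
    interior (dyadicCube d n k) =
      {x | ∀ i, x i ∈ Ioo (k i / 2 ^ n : ℝ) ((k i + 1) / 2 ^ n)} :=
  interior_setOf_forall_mem_Icc _ _

lemma dyadicCube_subset_of_not_disjoint_interior {n m : ℕ} (hnm : n ≤ m) {k l : Fin d → ℤ}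
    (h : ¬ Disjoint (interior (dyadicCube d n k)) (interior (dyadicCube d m l))) :
    dyadicCube d m l ⊆ dyadicCube d n k := by
  obtain ⟨x, hk, hl⟩ := not_disjoint_iff_nonempty_inter.mp h
  rw [interior_dyadicCube] at hk hl
  exact fun y hy i =>
    dyadicInterval_subset hnm (dyadic_index_bounds_of_mem_Ioo hnm (hk i) (hl i)) (hy i)

lemma disjoint_interior_dyadicCube {n : ℕ} {k l : Fin d → ℤ} (hkl : k ≠ l) :
    Disjoint (interior (dyadicCube d n k)) (interior (dyadicCube d n l)) := by
  by_contra h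
  obtain ⟨x, hk, hl⟩ := not_disjoint_iff_nonempty_inter.mp h
  rw [interior_dyadicCube] at hk hl
  refine hkl (funext fun i => ?_)
  have := dyadic_index_bounds_of_mem_Ioo le_rfl (hk i) (hl i)
  simp only [Nat.sub_self, pow_zero, mul_one] at this
  omega

lemma dist_le_of_mem_dyadicCube {n : ℕ} {k : Fin d → ℤ} {x y : EuclideanSpace ℝ (Fin d)}
    (hx : x ∈ dyadicCube d n k) (hy : y ∈ dyadicCube d n k) :
    dist x y ≤ √d / 2 ^ n := by
  have hcoord : ∀ i, dist (x i) (y i) ^ 2 ≤ (1 / 2 ^ n) ^ 2 := fun i => by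
    have h := Real.dist_le_of_mem_Icc (hx i) (hy i)
    rw [← sub_div, add_sub_cancel_left] at h
    exact pow_le_pow_left₀ dist_nonneg h 2
  calc dist x y = √(∑ i, dist (x i) (y i) ^ 2) := EuclideanSpace.dist_eq x y
    _ ≤ √(∑ _i : Fin d, (1 / 2 ^ n) ^ 2) :=
      Real.sqrt_le_sqrt (Finset.sum_le_sum fun i _ => hcoord i)
    _ = √d / 2 ^ n := by
      rw [Finset.sum_const, Finset.card_univ, Fintype.card_fin, nsmul_eq_mul,
        Real.sqrt_mul (Nat.cast_nonneg d), Real.sqrt_sq (by positivity), mul_one_div]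

lemma isBounded_dyadicCube (n : ℕ) (k : Fin d → ℤ) : Bornology.IsBounded (dyadicCube d n k) :=
  isBounded_iff.2 ⟨_, fun _ hx _ hy => dist_le_of_mem_dyadicCube hx hy⟩

lemma finite_setOf_dyadicCube_inter_nonempty {S : Set (EuclideanSpace ℝ (Fin d))}
    (hS : Bornology.IsBounded S) (n : ℕ) :
    {l : Fin d → ℤ | (dyadicCube d n l ∩ S).Nonempty}.Finite := by
  obtain ⟨R, hR⟩ := hS.subset_closedBall 0
  refine (Set.Finite.pi fun _ => finite_Icc ⌊-(2 ^ n * R) - 1⌋ ⌈2 ^ n * R⌉).subset ?_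
  rintro l ⟨x, hxl, hxS⟩ i -
  have hx : |x i| ≤ R := by
    simpa using (PiLp.norm_apply_le x i).trans (mem_closedBall_zero_iff.mp (hR hxS))
  have h2 : (0 : ℝ) < 2 ^ n := by positivity
  obtain ⟨h1, h3⟩ := hxl i
  rw [div_le_iff₀' h2] at h1
  rw [le_div_iff₀' h2] at h3
  have hxR := abs_le.mp hx
  constructor
  · have : ((⌊-(2 ^ n * R) - 1⌋ : ℤ) : ℝ) ≤ l i :=
      (Int.floor_le _).trans (by nlinarith)
    exact_mod_cast this
  · have : (l i : ℝ) ≤ ⌈2 ^ n * R⌉ := le_trans (by nlinarith) (Int.le_ceil _)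
    exact_mod_cast this

end Dyadic

section Whitney

variable {d : ℕ} {C : Set (EuclideanSpace ℝ (Fin d))}

def IsAdmissibleCube (C : Set (EuclideanSpace ℝ (Fin d))) (n : ℕ) (k : Fin d → ℤ) : Prop :=
  ∀ x ∈ dyadicCube d n k, ∀ y ∈ C, (2 ^ n)⁻¹ ≤ dist x y

def IsWhitneyCube (C : Set (EuclideanSpace ℝ (Fin d))) (n : ℕ) (k : Fin d → ℤ) : Prop :=
  IsAdmissibleCube C n k ∧
    ∀ m < n, ∀ k', dyadicCube d n k ⊆ dyadicCube d m k' → ¬ IsAdmissibleCube C m k'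

lemma IsAdmissibleCube.notMem {n : ℕ} {k : Fin d → ℤ} (h : IsAdmissibleCube C n k)
    {x : EuclideanSpace ℝ (Fin d)} (hx : x ∈ dyadicCube d n k) : x ∉ C := fun hxC => by
  have := h x hx x hxC
  rw [dist_self] at this
  exact (inv_pos.mpr (by positivity : (0 : ℝ) < 2 ^ n)).not_ge this

lemma exists_isAdmissibleCube_floor (hC : IsClosed C) {x : EuclideanSpace ℝ (Fin d)}
    (hx : x ∉ C) : ∃ n, IsAdmissibleCube C n (fun i => ⌊2 ^ n * x i⌋) := by
  obtain ⟨r, hr, hball⟩ := Metric.isOpen_iff.mp hC.isOpen_compl x hx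
  have hxC : ∀ y ∈ C, r ≤ dist x y := fun y hy =>
    le_of_not_gt fun h => hball (mem_ball'.mpr h) hy
  obtain ⟨n, hn⟩ := pow_unbounded_of_one_lt ((√d + 1) / r) (one_lt_two : (1 : ℝ) < 2)
  have h2 : (0 : ℝ) < 2 ^ n := by positivity
  rw [div_lt_iff₀ hr, ← div_lt_iff₀' h2, add_div] at hn
  refine ⟨n, fun z hz y hy => ?_⟩
  have hxz := dist_le_of_mem_dyadicCube (mem_dyadicCube_floor n x) hz
  have := dist_triangle x z y
  rw [← one_div]
  linarith [hxC y hy]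

lemma exists_isWhitneyCube_mem (hC : IsClosed C) {x : EuclideanSpace ℝ (Fin d)} (hx : x ∉ C) :
    ∃ n k, IsWhitneyCube C n k ∧ x ∈ dyadicCube d n k := by
  classical
  have hex : ∃ n k, x ∈ dyadicCube d n k ∧ IsAdmissibleCube C n k :=
    (exists_isAdmissibleCube_floor hC hx).imp fun n h => ⟨_, mem_dyadicCube_floor n x, h⟩
  obtain ⟨k, hxk, hk⟩ := Nat.find_spec hex
  refine ⟨Nat.find hex, k, ⟨hk, fun m hm k' hsub hk' => ?_⟩, hxk⟩
  exact Nat.find_min hex hm ⟨k', hsub hxk, hk'⟩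

lemma IsWhitneyCube.disjoint_interior_of_le {n m : ℕ} {k l : Fin d → ℤ}
    (hk : IsWhitneyCube C n k) (hl : IsWhitneyCube C m l) (hnm : n ≤ m)
    (hne : (n, k) ≠ (m, l)) :
    Disjoint (interior (dyadicCube d n k)) (interior (dyadicCube d m l)) := by
  rcases hnm.lt_or_eq with hlt | rfl
  · by_contra h
    exact hl.2 n hlt k (dyadicCube_subset_of_not_disjoint_interior hnm h) hk.1
  · exact disjoint_interior_dyadicCube fun h => hne (h ▸ rfl)

lemma IsWhitneyCube.disjoint_interior {n m : ℕ} {k l : Fin d → ℤ}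
    (hk : IsWhitneyCube C n k) (hl : IsWhitneyCube C m l) (hne : (n, k) ≠ (m, l)) :
    Disjoint (interior (dyadicCube d n k)) (interior (dyadicCube d m l)) := by
  rcases le_total n m with hnm | hmn
  · exact hk.disjoint_interior_of_le hl hnm hne
  · exact (hl.disjoint_interior_of_le hk hmn hne.symm).symm

end Whitney

lemma Function.Injective.tendsto_extend_cofinite {ι κ β : Type*} [TopologicalSpace β]
    {σ : ι → κ} (hσ : Function.Injective σ) {g : ι → β} {b : β}
    (hg : Tendsto g cofinite (nhds b)) :
    Tendsto (Function.extend σ g fun _ => b) cofinite (nhds b) := by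
  intro s hs
  have hfin : {i | g i ∉ s}.Finite := hg hs
  rw [mem_map, mem_cofinite]
  refine (hfin.image σ).subset fun n hn => ?_
  by_cases h : ∃ i, σ i = n
  · obtain ⟨i, rfl⟩ := h
    exact ⟨i, by simpa [hσ.extend_apply] using hn, rfl⟩
  · rw [mem_compl_iff, mem_preimage, Function.extend_apply' _ _ _ h] at hn
    exact absurd (mem_of_mem_nhds hs) hn

section SetDist

variable {α : Type*} [PseudoMetricSpace α]

lemma setDist_nonneg (S B : Set α) : 0 ≤ setDist S B := by
  unfold setDist
  split_ifs
  · exact Real.sInf_nonneg (by rintro r ⟨a, -, b, -, rfl⟩; exact dist_nonneg)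
  · exact zero_le_one

lemma le_setDist {S B : Set α} {δ : ℝ} (hS : S.Nonempty) (hδ : δ ≤ 1)
    (h : ∀ x ∈ S, ∀ y ∈ B, δ ≤ dist x y) : δ ≤ setDist S B := by
  unfold setDist
  split_ifs with hB
  · obtain ⟨x, hx⟩ := hS
    obtain ⟨y, hy⟩ := hB
    exact le_csInf ⟨_, x, hx, y, hy, rfl⟩ fun r ⟨a, ha, b, hb, hr⟩ => hr ▸ h a ha b hb
  · exact hδ

end SetDist

lemma diam_div_setDist_le {d n m : ℕ} {l : Fin d → ℤ} {S A : Set (EuclideanSpace ℝ (Fin d))}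
    (hS : S ⊆ dyadicCube d (n + m) l) (hA : ∀ x ∈ S, ∀ y ∈ A, (2 ^ n)⁻¹ ≤ dist x y) :
    diam S / setDist S A ≤ √d / 2 ^ m := by
  rcases S.eq_empty_or_nonempty with rfl | hne
  · rw [diam_empty, zero_div]
    positivity
  have hdist := le_setDist hne (inv_le_one_of_one_le₀ (one_le_pow₀ one_le_two)) hA
  have hdiam : diam S ≤ √d / 2 ^ (n + m) := diam_le_of_forall_dist_le (by positivity)
    fun x hx y hy => dist_le_of_mem_dyadicCube (hS hx) (hS hy)
  calc diam S / setDist S A ≤ (√d / 2 ^ (n + m)) / (2 ^ n)⁻¹ :=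
        div_le_div₀ (by positivity) hdiam (by positivity) hdist
    _ = √d / 2 ^ m := by rw [pow_add]; field_simp

section WhitneyPieces

variable {d : ℕ} {C : Set (EuclideanSpace ℝ (Fin d))} {κ : Type*}
  {V : κ → Set (EuclideanSpace ℝ (Fin d))}

abbrev WhitneyIndex (C : Set (EuclideanSpace ℝ (Fin d))) :=
  {p : ℕ × (Fin d → ℤ) // IsWhitneyCube C p.1 p.2}

/-- The Whitney cube `s.1.1` cut by `V s.1.2` and by the dyadic cube `s.2` of the grid
`e s.1` levels finer. -/
def whitneyPiece (V : κ → Set (EuclideanSpace ℝ (Fin d))) (e : WhitneyIndex C × κ → ℕ)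
    (s : (WhitneyIndex C × κ) × (Fin d → ℤ)) : Set (EuclideanSpace ℝ (Fin d)) :=
  dyadicCube d s.1.1.1.1 s.1.1.1.2 ∩ V s.1.2 ∩ dyadicCube d (s.1.1.1.1 + e s.1) s.2

lemma whitneyPiece_subset (e : WhitneyIndex C × κ → ℕ)
    (s : (WhitneyIndex C × κ) × (Fin d → ℤ)) :
    whitneyPiece V e s ⊆ V s.1.2 :=
  inter_subset_left.trans inter_subset_right

lemma isBox_whitneyPiece (hV : ∀ j, IsBox d (V j)) (e : WhitneyIndex C × κ → ℕ)
    (s : (WhitneyIndex C × κ) × (Fin d → ℤ)) : IsBox d (whitneyPiece V e s) :=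
  IsBox.inter (IsBox.inter (isBox_dyadicCube _ _) (hV _)) (isBox_dyadicCube _ _)

lemma pairwise_disjoint_interior_whitneyPiece
    (hV : Pairwise fun i j => Disjoint (interior (V i)) (interior (V j)))
    (e : WhitneyIndex C × κ → ℕ) :
    Pairwise fun s t =>
      Disjoint (interior (whitneyPiece V e s)) (interior (whitneyPiece V e t)) := by
  rintro ⟨⟨w, j⟩, l⟩ ⟨⟨w', j'⟩, l'⟩ hne
  by_cases hw : w = w'
  · subst hw
    by_cases hj : j = j'
    · subst hj
      exact (disjoint_interior_dyadicCube fun h => hne (congrArg _ h)).mono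
        (interior_mono inter_subset_right) (interior_mono inter_subset_right)
    · exact (hV hj).mono (interior_mono (whitneyPiece_subset e _))
        (interior_mono (whitneyPiece_subset e _))
  · exact (w.2.disjoint_interior w'.2 fun h => hw (Subtype.ext h)).mono
      (interior_mono (inter_subset_left.trans inter_subset_left))
      (interior_mono (inter_subset_left.trans inter_subset_left))

lemma iUnion_whitneyPiece (hC : IsClosed C) (e : WhitneyIndex C × κ → ℕ) :
    ⋃ s, whitneyPiece V e s = Cᶜ ∩ ⋃ j, V j := by
  ext x
  simp only [mem_iUnion, mem_inter_iff, mem_compl_iff]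
  constructor
  · rintro ⟨s, ⟨hxw, hxV⟩, -⟩
    exact ⟨s.1.1.2.1.notMem hxw, s.1.2, hxV⟩
  · rintro ⟨hxC, j, hxV⟩
    obtain ⟨n, k, hw, hxw⟩ := exists_isWhitneyCube_mem hC hxC
    let p : WhitneyIndex C × κ := (⟨(n, k), hw⟩, j)
    exact ⟨(p, fun i => ⌊2 ^ (n + e p) * x i⌋), ⟨hxw, hxV⟩, mem_dyadicCube_floor _ x⟩

lemma tendsto_diam_div_setDist_whitneyPiece {A : Set (EuclideanSpace ℝ (Fin d))} (hAC : A ⊆ C)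
    {e : WhitneyIndex C × κ → ℕ} (he : Function.Injective e) :
    Tendsto (fun s => diam (whitneyPiece V e s) / setDist (whitneyPiece V e s) A) cofinite
      (nhds 0) := by
  have hbound : ∀ s,
      diam (whitneyPiece V e s) / setDist (whitneyPiece V e s) A ≤ √d / 2 ^ e s.1 :=
    fun s => diam_div_setDist_le inter_subset_right
      fun x hx y hy => s.1.1.2.1 x hx.1.1 y (hAC hy)
  refine tendsto_order.2 ⟨fun a ha => Eventually.of_forall fun s =>
    ha.trans_le (div_nonneg diam_nonneg (setDist_nonneg _ _)), fun ε hε => ?_⟩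
  obtain ⟨N, hN⟩ := pow_unbounded_of_one_lt (√d / ε) (one_lt_two : (1 : ℝ) < 2)
  rw [div_lt_iff₀ hε, ← div_lt_iff₀' (by positivity)] at hN
  have hfin : (e ⁻¹' Iio N).Finite := (finite_Iio N).preimage he.injOn
  refine (hfin.prod (hfin.biUnion fun p _ => finite_setOf_dyadicCube_inter_nonempty
    (isBounded_dyadicCube p.1.1.1 p.1.1.2) (p.1.1.1 + e p))).subset ?_
  rintro ⟨p, l⟩ hs
  replace hs : ε ≤ diam (whitneyPiece V e (p, l)) / setDist (whitneyPiece V e (p, l)) A :=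
    not_lt.mp hs
  have hp : e p < N := by
    by_contra! h
    exact (hs.trans (hbound _)).not_gt (lt_of_le_of_lt (by gcongr; exact one_le_two) hN)
  obtain ⟨x, hx⟩ : (whitneyPiece V e (p, l)).Nonempty := by
    by_contra! h
    rw [h, diam_empty, zero_div] at hs
    exact hε.not_ge hs
  exact ⟨hp, mem_biUnion hp ⟨x, hx.2, hx.1.1⟩⟩

end WhitneyPieces

section Assembly

variable {d : ℕ}

lemma exists_nat_reindex (hd : 1 ≤ d) {ι : Type*} [Countable ι]
    {A : Set (EuclideanSpace ℝ (Fin d))} {P : ι → Set (EuclideanSpace ℝ (Fin d))}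
    (hP : ∀ i, IsBox d (P i))
    (hPdisj : Pairwise fun i j => Disjoint (interior (P i)) (interior (P j)))
    (hPlim : Tendsto (fun i => diam (P i) / setDist (P i) A) cofinite (nhds 0)) :
    ∃ U : ℕ → Set (EuclideanSpace ℝ (Fin d)),
      (∀ n, IsBox d (U n)) ∧
      (Pairwise fun n m => Disjoint (interior (U n)) (interior (U m))) ∧
      ⋃ n, U n = ⋃ i, P i ∧
      Tendsto (fun n => diam (U n) / setDist (U n) A) atTop (nhds 0) ∧
      ∀ n, U n = ∅ ∨ ∃ i, U n = P i := by
  obtain ⟨σ, hσ⟩ := exists_injective_nat ι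
  set U := Function.extend σ P fun _ => ∅
  have hUσ : ∀ i, U (σ i) = P i := hσ.extend_apply P _
  have hU : ∀ n, U n = ∅ ∨ ∃ i, σ i = n := fun n => by
    by_cases h : ∃ i, σ i = n
    · exact .inr h
    · exact .inl (Function.extend_apply' _ _ _ h)
  refine ⟨U, fun n => ?_, fun n m hnm => ?_, ?_, ?_, fun n => (hU n).imp_right ?_⟩
  · rcases hU n with h | ⟨i, rfl⟩
    · exact h ▸ isBox_empty hd
    · exact hUσ i ▸ hP i
  · rcases hU n with h | ⟨i, rfl⟩
    · simp [h]
    rcases hU m with h | ⟨j, rfl⟩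
    · simp [h]
    rw [hUσ, hUσ]
    exact hPdisj fun hij => hnm (congrArg σ hij)
  · refine subset_antisymm (iUnion_subset fun n => ?_) (iUnion_subset fun i => ?_)
    · rcases hU n with h | ⟨i, rfl⟩
      · exact h ▸ empty_subset _
      · exact hUσ i ▸ subset_iUnion P i
    · exact hUσ i ▸ subset_iUnion U (σ i)
  · have hratio : (fun n => diam (U n) / setDist (U n) A) =
        Function.extend σ (fun i => diam (P i) / setDist (P i) A) fun _ => 0 := by
      ext n
      rw [Function.apply_extend (fun S => diam S / setDist S A)]
      simp only [Function.comp_def, diam_empty, zero_div]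
    rw [hratio, ← Nat.cofinite_eq_atTop]
    exact Function.Injective.tendsto_extend_cofinite hσ hPlim
  · rintro ⟨i, rfl⟩
    exact ⟨i, hUσ i⟩

lemma exists_boxes_subordinate (hd : 1 ≤ d) {F A C : Set (EuclideanSpace ℝ (Fin d))}
    (hC : IsClosed C) (hA : A = F ∩ C) {κ : Type*} [Countable κ] [Nonempty κ]
    {V : κ → Set (EuclideanSpace ℝ (Fin d))} (hV : ∀ j, IsBox d (V j))
    (hVdisj : Pairwise fun i j => Disjoint (interior (V i)) (interior (V j)))
    (hcov : F \ A ⊆ ⋃ j, V j) :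
    ∃ U : ℕ → Set (EuclideanSpace ℝ (Fin d)),
      (∀ i, IsBox d (U i)) ∧
      (Pairwise fun i j => Disjoint (interior (U i)) (interior (U j))) ∧
      F ∩ (⋃ i, U i) = F \ A ∧
      Tendsto (fun i => diam (U i) / setDist (U i) A) atTop (nhds 0) ∧
      ∀ i, ∃ j, U i ⊆ V j := by
  obtain ⟨e, he⟩ := exists_injective_nat (WhitneyIndex C × κ)
  obtain ⟨U, hU, hUdisj, hUunion, hUlim, hUP⟩ := exists_nat_reindex hd
    (isBox_whitneyPiece hV e) (pairwise_disjoint_interior_whitneyPiece hVdisj e)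
    (tendsto_diam_div_setDist_whitneyPiece (hA ▸ inter_subset_right) he)
  refine ⟨U, hU, hUdisj, ?_, hUlim, fun n => ?_⟩
  · subst hA
    rw [hUunion, iUnion_whitneyPiece hC, ← inter_assoc, ← sdiff_eq, sdiff_self_inter]
    exact inter_eq_left.mpr (sdiff_self_inter ▸ hcov)
  · rcases hUP n with h | ⟨s, h⟩
    · exact ⟨Classical.arbitrary κ, h ▸ empty_subset _⟩
    · exact ⟨s.1.2, h ▸ whitneyPiece_subset e s⟩

end Assembly

theorem stmt_6 (d : ℕ) (hd : 1 ≤ d) (F A : Set (EuclideanSpace ℝ (Fin d)))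
    (hA : ∃ C, IsClosed C ∧ A = F ∩ C) :
    (∃ U : ℕ → Set (EuclideanSpace ℝ (Fin d)),
      (∀ i, IsBox d (U i)) ∧
      (Pairwise fun i j => Disjoint (interior (U i)) (interior (U j))) ∧
      F ∩ (⋃ i, U i) = F \ A ∧
      Tendsto (fun i => Metric.diam (U i) / setDist (U i) A) atTop (nhds 0)) ∧
    (∀ V : ℕ → Set (EuclideanSpace ℝ (Fin d)),
      (∀ i, IsBox d (V i)) →
      (Pairwise fun i j => Disjoint (interior (V i)) (interior (V j))) →
      F \ A ⊆ F ∩ (⋃ i, V i) →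
      ∃ U : ℕ → Set (EuclideanSpace ℝ (Fin d)),
        (∀ i, IsBox d (U i)) ∧
        (Pairwise fun i j => Disjoint (interior (U i)) (interior (U j))) ∧
        F ∩ (⋃ i, U i) = F \ A ∧
        Tendsto (fun i => Metric.diam (U i) / setDist (U i) A) atTop (nhds 0) ∧
        ∀ i, ∃ j, U i ⊆ V j) := by
  obtain ⟨C, hC, hAC⟩ := hA
  refine ⟨?_, fun V hV hVdisj hcov =>
    exists_boxes_subordinate hd hC hAC hV hVdisj fun x hx => (hcov hx).2⟩
  obtain ⟨U, hU, hUdisj, hUcov, hUlim, -⟩ := exists_boxes_subordinate hd hC hAC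
    (isBox_dyadicCube 0) (fun _ _ hkl => disjoint_interior_dyadicCube hkl)
    (fun x _ => mem_iUnion.2 ⟨_, mem_dyadicCube_floor 0 x⟩)
  exact ⟨U, hU, hUdisj, hUcov, hUlim⟩
end

section
/- Let d ≥ 1 be an integer, let E ⊆ ℝ^d, let η > 0, and let {U_i}_{i=1}^∞ be a collection of boxes in ℝ^d with pairwise disjoint interiors such that E ∩ Int(U_i) is a non-universal differentiability set for each i. Then there exists a Lipschitz function g : ℝ^d → ℝ such that sup_{x ∈ ℝ^d} |g(x)| ≤ η and Lip(g) ≤ η, g is differentiable at no point of ⋃_{i=1}^∞ (E ∩ Int(U_i)), and g(x) = 0 for every x ∈ ℝ^d \ ⋃_{i=1}^∞ Int(U_i). -/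
/-!
On `Int(U_i)` take a Lipschitz `f_i` differentiable at no point of `E ∩ Int(U_i)`. Truncate it to a
bounded Lipschitz function agreeing with `f_i` on the bounded set `Int(U_i)`, multiply by a smooth
bump whose support is exactly `Int(U_i)` (nonzero there, so dividing by it recovers `f_i` near each
point of `Int(U_i)`), and rescale until both the sup norm and the Lipschitz constant are at most
`η`. The pieces have disjoint supports and `g` is their sum. It is `η`-Lipschitz: a segment
`[x, y]` not inside a single `Int(U_i)` contains, by connectedness, a point `z` outside all of
them, where `g` vanishes, and the estimate splits at `z`.
-/

open Metric Set Filter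

open Bornology Function Topology

lemma IsBox.isCompact {d : ℕ} {U : Set (EuclideanSpace ℝ (Fin d))} (hU : IsBox d U) :
    IsCompact U := by
  obtain ⟨a, b, rfl⟩ := hU
  convert (EuclideanSpace.equiv (Fin d) ℝ).toHomeomorph.isCompact_preimage.2
    (isCompact_Icc (a := a) (b := b)) using 1
  ext x
  simp [Pi.le_def, forall_and]

lemma exists_lipschitzWith_not_differentiableAt_of_not_isUDS {d : ℕ}
    {S : Set (EuclideanSpace ℝ (Fin d))} (hS : ¬ IsUDS d S) :
    ∃ (f : EuclideanSpace ℝ (Fin d) → ℝ) (K : NNReal),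
      LipschitzWith K f ∧ ∀ x ∈ S, ¬ DifferentiableAt ℝ f x := by
  simpa [IsUDS] using hS

lemma lipConst_le {α : Type*} [PseudoMetricSpace α] {f : α → ℝ} {K : NNReal}
    (hf : LipschitzWith K f) : lipConst f ≤ K :=
  csInf_le (OrderBot.bddBelow _) hf

lemma IsPreconnected.subset_of_subset_iUnion {α ι : Type*} [TopologicalSpace α] {s : Set α}
    (hs : IsPreconnected s) {V : ι → Set α} (hVo : ∀ i, IsOpen (V i))
    (hdisj : Pairwise (Disjoint on V)) (hsV : s ⊆ ⋃ j, V j) {x : α} {i : ι} (hxs : x ∈ s)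
    (hxi : x ∈ V i) : s ⊆ V i := by
  refine hs.subset_left_of_subset_union (hVo i) (isOpen_biUnion fun j (_ : j ≠ i) => hVo j)
    (disjoint_iUnion₂_right.2 fun j hj => hdisj (Ne.symm hj)) (fun y hy => ?_) ⟨x, hxs, hxi⟩
  obtain ⟨j, hyj⟩ := mem_iUnion.1 (hsV hy)
  by_cases hji : j = i
  · exact Or.inl (hji ▸ hyj)
  · exact Or.inr (mem_biUnion hji hyj)

lemma LipschitzWith.exists_bounded_eqOn {α : Type*} [PseudoMetricSpace α] {f : α → ℝ}
    {K : NNReal} (hf : LipschitzWith K f) {s : Set α} (hs : IsBounded s) :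
    ∃ h : α → ℝ, LipschitzWith K h ∧ (∃ C : ℝ, ∀ x, |h x| ≤ C) ∧ EqOn h f s := by
  obtain ⟨C, hC, hfC⟩ := (hf.isBounded_image hs).exists_pos_norm_le
  refine ⟨fun x => max (-C) (min (f x) C), (hf.min_const C).const_max (-C),
    ⟨C, fun x => abs_le.2 ⟨le_max_left _ _, max_le (by linarith) (min_le_right _ _)⟩⟩,
    fun x hx => ?_⟩
  have hfx := abs_le.1 (hfC (f x) (mem_image_of_mem f hx))
  simp only [min_eq_left hfx.2, max_eq_right hfx.1]

lemma LipschitzWith.mul_of_abs_le {α : Type*} [PseudoMetricSpace α] {f g : α → ℝ}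
    {Kf Kg A B : NNReal} (hf : LipschitzWith Kf f) (hg : LipschitzWith Kg g)
    (hfA : ∀ x, |f x| ≤ A) (hgB : ∀ x, |g x| ≤ B) :
    LipschitzWith (A * Kg + B * Kf) fun x => f x * g x := by
  refine LipschitzWith.of_dist_le_mul fun x y => ?_
  have hfxy := hf.dist_le_mul x y
  have hgxy := hg.dist_le_mul x y
  rw [Real.dist_eq] at hfxy hgxy ⊢
  calc |f x * g x - f y * g y| = |f x * (g x - g y) + g y * (f x - f y)| := by
        congr 1; ring
    _ ≤ |f x| * |g x - g y| + |g y| * |f x - f y| := by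
        rw [← abs_mul, ← abs_mul]; exact abs_add_le _ _
    _ ≤ A * (Kg * dist x y) + B * (Kf * dist x y) := by
        gcongr; exacts [hfA x, hgB y]
    _ = (A * Kg + B * Kf : NNReal) * dist x y := by push_cast; ring

lemma LipschitzWith.exists_smul_le {α : Type*} [PseudoMetricSpace α] {f : α → ℝ} {K : NNReal}
    (hf : LipschitzWith K f) {M : ℝ} (hfM : ∀ x, |f x| ≤ M) {η : ℝ} (hη : 0 < η) :
    ∃ c : ℝ, c ≠ 0 ∧ LipschitzWith η.toNNReal (fun x => c * f x) ∧ ∀ x, |c * f x| ≤ η := by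
  obtain ⟨D, hD, hKD, hMD⟩ : ∃ D : ℝ, 0 < D ∧ (K : ℝ) ≤ D ∧ M ≤ D :=
    ⟨K + |M| + 1, by positivity, by linarith [abs_nonneg M], by linarith [le_abs_self M]⟩
  have hc : 0 < η / D := div_pos hη hD
  have hcD : η / D * D = η := div_mul_cancel₀ η hD.ne'
  refine ⟨η / D, hc.ne', LipschitzWith.of_dist_le_mul fun x y => ?_, fun x => ?_⟩
  · rw [Real.coe_toNNReal η hη.le, Real.dist_eq, ← mul_sub, abs_mul, abs_of_pos hc]
    calc η / D * |f x - f y| ≤ η / D * (D * dist x y) := by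
          gcongr
          exact (Real.dist_eq _ _ ▸ hf.dist_le_mul x y).trans (by gcongr)
      _ = η * dist x y := by rw [← mul_assoc, hcD]
  · calc |η / D * f x| = η / D * |f x| := by rw [abs_mul, abs_of_pos hc]
      _ ≤ η / D * D := by gcongr; exact (hfM x).trans hMD
      _ = η := hcD

lemma DifferentiableAt.of_mul_of_ne_zero {𝕜 E : Type*} [NontriviallyNormedField 𝕜]
    [NormedAddCommGroup E] [NormedSpace 𝕜 E] {φ h : E → 𝕜} {x : E}
    (hφh : DifferentiableAt 𝕜 (fun y => φ y * h y) x) (hφ : DifferentiableAt 𝕜 φ x)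
    (hφx : φ x ≠ 0) : DifferentiableAt 𝕜 h x := by
  refine ((hφh.mul (hφ.inv hφx))).congr_of_eventuallyEq ?_
  filter_upwards [hφ.continuousAt.eventually_ne hφx] with y hy
  simp only [Pi.mul_apply, Pi.inv_apply, mul_comm (φ y), mul_inv_cancel_right₀ hy]

section FiniteDimensional

variable {E : Type*} [NormedAddCommGroup E] [NormedSpace ℝ E] [FiniteDimensional ℝ E]

lemma IsOpen.exists_lipschitz_differentiable_support_eq {V : Set E} (hV : IsOpen V)
    (hVb : IsBounded V) :
    ∃ φ : E → ℝ, support φ = V ∧ Differentiable ℝ φ ∧ (∀ x, |φ x| ≤ 1) ∧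
      ∃ L, LipschitzWith L φ := by
  obtain ⟨φ, hφV, hφ, hφ01⟩ := hV.exists_contDiff_support_eq (n := 1)
  have hφc : HasCompactSupport φ := by
    rw [HasCompactSupport, tsupport, hφV]; exact hVb.isCompact_closure
  refine ⟨φ, hφV, hφ.differentiable one_ne_zero, fun x => ?_,
    hφ.lipschitzWith_of_hasCompactSupport hφc one_ne_zero⟩
  obtain ⟨h0, h1⟩ := hφ01 (mem_range_self x)
  exact abs_le.2 ⟨by linarith, h1⟩

lemma exists_lipschitz_support_subset_not_differentiableAt {S V : Set E} (hV : IsOpen V)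
    (hVb : IsBounded V) (hSV : S ⊆ V) {f : E → ℝ} {K : NNReal} (hf : LipschitzWith K f)
    (hfS : ∀ x ∈ S, ¬ DifferentiableAt ℝ f x) {η : ℝ} (hη : 0 < η) :
    ∃ G : E → ℝ, LipschitzWith η.toNNReal G ∧ (∀ x, |G x| ≤ η) ∧ support G ⊆ V ∧
      ∀ x ∈ S, ¬ DifferentiableAt ℝ G x := by
  obtain ⟨φ, hφV, hφd, hφ1, L, hφL⟩ := hV.exists_lipschitz_differentiable_support_eq hVb
  obtain ⟨h, hhK, ⟨C, hhC⟩, hhf⟩ := hf.exists_bounded_eqOn hVb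
  have hφh := hφL.mul_of_abs_le hhK (A := 1) (B := C.toNNReal) (by simpa using hφ1)
    (fun x => (hhC x).trans (Real.le_coe_toNNReal C))
  have hφhC : ∀ x, |φ x * h x| ≤ C := fun x => by
    rw [abs_mul]
    exact (mul_le_of_le_one_left (abs_nonneg _) (hφ1 x)).trans (hhC x)
  obtain ⟨c, hc, hcL, hcη⟩ := hφh.exists_smul_le hφhC hη
  refine ⟨fun x => c * (φ x * h x), hcL, hcη, fun x hx => ?_, fun x hxS hdiff => ?_⟩
  · rw [← hφV]
    exact left_ne_zero_of_mul (right_ne_zero_of_mul hx)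
  have hxV := hSV hxS
  have hφx : φ x ≠ 0 := by rwa [← mem_support, hφV]
  have hφhx : DifferentiableAt ℝ (fun y => φ y * h y) x := by
    simpa [← mul_assoc, hc] using hdiff.const_mul c⁻¹
  have hhx := hφhx.of_mul_of_ne_zero (hφd x) hφx
  exact hfS x hxS (hhx.congr_of_eventuallyEq (hhf.eventuallyEq_of_mem (hV.mem_nhds hxV)).symm)

end FiniteDimensional

section Gluing

variable {E ι : Type*} {V : ι → Set E} {G : ι → E → ℝ}

lemma tsum_apply_eq_of_mem (hdisj : Pairwise (Disjoint on V)) (hG : ∀ i, support (G i) ⊆ V i)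
    {i : ι} {x : E} (hx : x ∈ V i) : ∑' j, G j x = G i x :=
  tsum_eq_single i fun j hj => notMem_support.1 fun hjx =>
    disjoint_left.1 (hdisj hj) (hG j hjx) hx

lemma tsum_apply_eq_zero_of_notMem (hG : ∀ i, support (G i) ⊆ V i) {x : E}
    (hx : x ∉ ⋃ j, V j) : ∑' j, G j x = 0 := by
  rw [tsum_congr fun j => notMem_support.1 fun hjx => hx (mem_iUnion_of_mem j (hG j hjx)),
    tsum_zero]

lemma tsum_apply_eventuallyEq [TopologicalSpace E] (hVo : ∀ i, IsOpen (V i))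
    (hdisj : Pairwise (Disjoint on V)) (hG : ∀ i, support (G i) ⊆ V i) {i : ι} {x : E}
    (hx : x ∈ V i) : (fun y => ∑' j, G j y) =ᶠ[𝓝 x] G i :=
  EqOn.eventuallyEq_of_mem (fun _ hy => tsum_apply_eq_of_mem hdisj hG hy) ((hVo i).mem_nhds hx)

lemma abs_tsum_apply_le (hdisj : Pairwise (Disjoint on V)) (hG : ∀ i, support (G i) ⊆ V i)
    {C : ℝ} (hC : 0 ≤ C) (hGC : ∀ i x, |G i x| ≤ C) (x : E) : |∑' j, G j x| ≤ C := by
  by_cases hx : x ∈ ⋃ j, V j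
  · obtain ⟨i, hxi⟩ := mem_iUnion.1 hx
    rw [tsum_apply_eq_of_mem hdisj hG hxi]
    exact hGC i x
  · rwa [tsum_apply_eq_zero_of_notMem hG hx, abs_zero]

lemma dist_tsum_apply_le_of_notMem [PseudoMetricSpace E] (hdisj : Pairwise (Disjoint on V))
    (hG : ∀ i, support (G i) ⊆ V i) {K : NNReal} (hGK : ∀ i, LipschitzWith K (G i)) (x : E)
    {z : E} (hz : z ∉ ⋃ j, V j) : dist (∑' j, G j x) (∑' j, G j z) ≤ K * dist x z := by
  rw [tsum_apply_eq_zero_of_notMem hG hz]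
  by_cases hx : x ∈ ⋃ j, V j
  · obtain ⟨i, hxi⟩ := mem_iUnion.1 hx
    rw [tsum_apply_eq_of_mem hdisj hG hxi,
      ← notMem_support.1 fun hiz => hz (mem_iUnion_of_mem i (hG i hiz))]
    exact (hGK i).dist_le_mul x z
  · rw [tsum_apply_eq_zero_of_notMem hG hx, dist_self]
    positivity

lemma lipschitzWith_tsum_apply [NormedAddCommGroup E] [NormedSpace ℝ E] (hVo : ∀ i, IsOpen (V i))
    (hdisj : Pairwise (Disjoint on V)) (hG : ∀ i, support (G i) ⊆ V i) {K : NNReal}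
    (hGK : ∀ i, LipschitzWith K (G i)) :
    LipschitzWith K fun x => ∑' j, G j x := by
  refine LipschitzWith.of_dist_le_mul fun x y => ?_
  by_cases hseg : segment ℝ x y ⊆ ⋃ j, V j
  · obtain ⟨i, hxi⟩ := mem_iUnion.1 (hseg (left_mem_segment ℝ x y))
    have hyi := (convex_segment x y).isPreconnected.subset_of_subset_iUnion hVo hdisj hseg
      (left_mem_segment ℝ x y) hxi (right_mem_segment ℝ x y)
    rw [tsum_apply_eq_of_mem hdisj hG hxi, tsum_apply_eq_of_mem hdisj hG hyi]
    exact (hGK i).dist_le_mul x y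
  obtain ⟨z, hzseg, hz⟩ := not_subset.1 hseg
  calc dist (∑' j, G j x) (∑' j, G j y)
      ≤ dist (∑' j, G j x) (∑' j, G j z) + dist (∑' j, G j y) (∑' j, G j z) :=
        dist_triangle_right _ _ _
    _ ≤ K * dist x z + K * dist y z := add_le_add
        (dist_tsum_apply_le_of_notMem hdisj hG hGK x hz)
        (dist_tsum_apply_le_of_notMem hdisj hG hGK y hz)
    _ = K * dist x y := by rw [dist_comm y z, ← mul_add, dist_add_dist_of_mem_segment hzseg]

end Gluing

theorem stmt_9_general (d : ℕ) (E : Set (EuclideanSpace ℝ (Fin d)))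
    (η : ℝ) (hη : 0 < η)
    (U : ℕ → Set (EuclideanSpace ℝ (Fin d))) (hU : ∀ i, IsBox d (U i))
    (hdisj : Pairwise fun i j => Disjoint (interior (U i)) (interior (U j)))
    (hnonUDS : ∀ i, ¬ IsUDS d (E ∩ interior (U i))) :
    ∃ g : EuclideanSpace ℝ (Fin d) → ℝ,
      (∃ K : NNReal, LipschitzWith K g) ∧
      (∀ x, |g x| ≤ η) ∧ (lipConst g : ℝ) ≤ η ∧
      (∀ x ∈ ⋃ i, E ∩ interior (U i), ¬ DifferentiableAt ℝ g x) ∧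
      ∀ x ∉ ⋃ i, interior (U i), g x = 0 := by
  have hpiece : ∀ i, ∃ G : EuclideanSpace ℝ (Fin d) → ℝ, LipschitzWith η.toNNReal G ∧
      (∀ x, |G x| ≤ η) ∧ support G ⊆ interior (U i) ∧
      ∀ x ∈ E ∩ interior (U i), ¬ DifferentiableAt ℝ G x := fun i => by
    obtain ⟨f, K, hf, hfS⟩ := exists_lipschitzWith_not_differentiableAt_of_not_isUDS (hnonUDS i)
    exact exists_lipschitz_support_subset_not_differentiableAt isOpen_interior
      ((hU i).isCompact.isBounded.subset interior_subset) inter_subset_right hf hfS hη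
  choose G hGK hGη hGU hGS using hpiece
  have hVo : ∀ i, IsOpen (interior (U i)) := fun i => isOpen_interior
  have hgK := lipschitzWith_tsum_apply hVo hdisj hGU hGK
  refine ⟨fun x => ∑' j, G j x, ⟨_, hgK⟩, abs_tsum_apply_le hdisj hGU hη.le hGη,
    (NNReal.coe_le_coe.2 (lipConst_le hgK)).trans_eq (Real.coe_toNNReal η hη.le),
    fun x hx hgx => ?_, fun x hx => tsum_apply_eq_zero_of_notMem hGU hx⟩
  obtain ⟨i, hxE, hxU⟩ := mem_iUnion.1 hx
  exact hGS i x ⟨hxE, hxU⟩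
    (hgx.congr_of_eventuallyEq (tsum_apply_eventuallyEq hVo hdisj hGU hxU).symm)

theorem stmt_9 (d : ℕ) (hd : 1 ≤ d) (E : Set (EuclideanSpace ℝ (Fin d)))
    (η : ℝ) (hη : 0 < η)
    (U : ℕ → Set (EuclideanSpace ℝ (Fin d))) (hU : ∀ i, IsBox d (U i))
    (hdisj : Pairwise fun i j => Disjoint (interior (U i)) (interior (U j)))
    (hnonUDS : ∀ i, ¬ IsUDS d (E ∩ interior (U i))) :
    ∃ g : EuclideanSpace ℝ (Fin d) → ℝ,
      (∃ K : NNReal, LipschitzWith K g) ∧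
      (∀ x, |g x| ≤ η) ∧ (lipConst g : ℝ) ≤ η ∧
      (∀ x ∈ ⋃ i, E ∩ interior (U i), ¬ DifferentiableAt ℝ g x) ∧
      ∀ x ∉ ⋃ i, interior (U i), g x = 0 :=
  stmt_9_general d E η hη U hU hdisj hnonUDS
end

section
/- Let d ≥ 1 be an integer, let x ∈ ℝ^d, let e be a unit vector in ℝ^d, let f, h : ℝ^d → ℝ be Lipschitz functions and let Δ > 0. Let {(t_{k,1}, t_{k,2})}_{k=1}^N, where 0 < t_{k,1} ≤ t_{k,2} and N ∈ ℕ ∪ {∞}, be a finite or countable collection of open (possibly empty/degenerate) intervals contained in (0, ∞) such that: (i) if N = ∞ then (t_{k,2} − t_{k,1})/t_{k,1} → 0 as k → ∞, and (ii) f(x + te) = h(x + te) for every t in ([0, Δ) \ ⋃_{k=1}^N (t_{k,1}, t_{k,2})) ∪ ⋃_{k=1}^N {t_{k,1}, t_{k,2}}. Then the one-sided directional derivative f'(x, e) exists if and only if h'(x, e) exists, and in that case f'(x, e) = h'(x, e). -/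
/-!
Along the ray, `g t = f (x + t • e) - h (x + t • e)` is Lipschitz, vanishes at `0`, off the gaps
`(t₁ₖ, t₂ₖ)` and at their left endpoints. Given `ε > 0`, only finitely many gaps have relative
length `(t₂ₖ - t₁ₖ) / t₁ₖ ≥ ε`, and they all lie beyond some `δ > 0`. So a point `t < δ` either is
a zero of `g` or lies in a gap with `t - t₁ₖ ≤ ε t₁ₖ ≤ ε t`, whence `|g t| ≤ K ε t`. Thus
`g t = o(t)` as `t → 0+`, and the difference quotients of `f` and `h` have the same limits.
-/

open Metric Set Filter

/-- The one-sided directional derivative `f'(x,e) = L`: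
`(f(x+te) - f x)/t → L` as `t → 0+`. -/
def HasDirDeriv {d : ℕ} (f : EuclideanSpace ℝ (Fin d) → ℝ)
    (x e : EuclideanSpace ℝ (Fin d)) (L : ℝ) : Prop :=
  Tendsto (fun t : ℝ => (f (x + t • e) - f x) / t) (nhdsWithin 0 (Set.Ioi 0)) (nhds L)

open Topology Asymptotics

theorem lipschitzWith_const_add_smul {E : Type*} [NormedAddCommGroup E] [NormedSpace ℝ E]
    (x e : E) :
    LipschitzWith ‖e‖₊ (fun t : ℝ => x + t • e) :=
  LipschitzWith.of_dist_le_mul fun s t => by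
    simp [dist_eq_norm, ← sub_smul, norm_smul, mul_comm]

theorem tendsto_cofinite_of_lt_enat {α : Type*} {N : ℕ∞} {u : ℕ → α} {l : Filter α}
    (hu : N = ⊤ → Tendsto u atTop l) :
    Tendsto (fun k : {k : ℕ // (k : ℕ∞) < N} => u k) cofinite l := by
  cases N with
  | top =>
    rw [← Nat.cofinite_eq_atTop] at hu
    exact (hu rfl).comp Subtype.val_injective.tendsto_cofinite
  | coe n =>
    have : Finite {k : ℕ // (k : ℕ∞) < n} := by
      simp only [Nat.cast_lt]
      infer_instance
    rw [cofinite_eq_bot]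
    exact tendsto_bot

theorem eventually_exists_mem_near_of_shrinking_gaps {ι : Type*} {a b : ι → ℝ} {S : Set ℝ}
    {Δ : ℝ} (hΔ : 0 < Δ) (ha : ∀ i, 0 < a i)
    (hshrink : Tendsto (fun i => (b i - a i) / a i) cofinite (𝓝 0))
    (hS : Ico 0 Δ \ ⋃ i, Ioo (a i) (b i) ⊆ S) (haS : ∀ i, a i ∈ S) :
    ∀ ε > 0, ∀ᶠ t in 𝓝[>] 0, ∃ s ∈ S, |t - s| ≤ ε * t := by
  intro ε hε
  have hlong : {i | ¬ (b i - a i) / a i < ε}.Finite := hshrink.eventually (gt_mem_nhds hε)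
  have hbeyond : ∀ᶠ t in 𝓝[>] (0 : ℝ), ∀ i ∈ {i | ¬ (b i - a i) / a i < ε}, t < a i :=
    (hlong.eventually_all).2 fun i _ => nhdsWithin_le_nhds (gt_mem_nhds (ha i))
  filter_upwards [self_mem_nhdsWithin, hbeyond, nhdsWithin_le_nhds (gt_mem_nhds hΔ)]
    with t (ht : 0 < t) htlong htΔ
  by_cases hgap : ∃ i, t ∈ Ioo (a i) (b i)
  · obtain ⟨i, hai, hbi⟩ := hgap
    have hshort : (b i - a i) / a i < ε := by
      by_contra hi
      exact (htlong i hi).not_gt hai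
    rw [div_lt_iff₀ (ha i)] at hshort
    refine ⟨a i, haS i, ?_⟩
    rw [abs_of_pos (sub_pos.2 hai)]
    nlinarith
  · refine ⟨t, hS ⟨⟨ht.le, htΔ⟩, by simpa using hgap⟩, ?_⟩
    rw [sub_self, abs_zero]
    positivity

theorem LipschitzWith.isLittleO_id_of_near_zeros {g : ℝ → ℝ} {K : NNReal}
    (hg : LipschitzWith K g)
    (hzeros : ∀ ε > 0, ∀ᶠ t in 𝓝[>] 0, ∃ s ∈ g ⁻¹' {0}, |t - s| ≤ ε * t) :
    g =o[𝓝[>] 0] id := by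
  refine isLittleO_iff.2 fun c hc => ?_
  filter_upwards [hzeros (c / (K + 1)) (by positivity), self_mem_nhdsWithin]
    with t ⟨s, hs, hts⟩ (ht : 0 < t)
  have hKc : (K : ℝ) * (c / (K + 1)) ≤ c := by
    rw [mul_div_assoc', div_le_iff₀ (by positivity)]
    nlinarith
  calc ‖g t‖ = dist (g t) (g s) := by
        rw [Real.dist_eq, show g s = 0 from hs, sub_zero, Real.norm_eq_abs]
    _ ≤ K * |t - s| := by rw [← Real.dist_eq]; exact hg.dist_le_mul t s
    _ ≤ K * (c / (K + 1) * t) := by gcongr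
    _ ≤ c * ‖id t‖ := by
        rw [id, Real.norm_of_nonneg ht.le, ← mul_assoc]
        gcongr

theorem HasDirDeriv.of_isLittleO_sub {d : ℕ} {f h : EuclideanSpace ℝ (Fin d) → ℝ}
    {x e : EuclideanSpace ℝ (Fin d)} {L : ℝ} (hfL : HasDirDeriv f x e L) (hx : f x = h x)
    (hfh : (fun t : ℝ => f (x + t • e) - h (x + t • e)) =o[𝓝[>] 0] id) :
    HasDirDeriv h x e L := by
  have hlim := hfL.sub hfh.tendsto_div_nhds_zero
  rw [sub_zero] at hlim
  refine hlim.congr fun t => ?_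
  rw [id, hx]
  ring

theorem hasDirDeriv_iff_of_isLittleO_sub {d : ℕ} {f h : EuclideanSpace ℝ (Fin d) → ℝ}
    {x e : EuclideanSpace ℝ (Fin d)} {L : ℝ} (hx : f x = h x)
    (hfh : (fun t : ℝ => f (x + t • e) - h (x + t • e)) =o[𝓝[>] 0] id) :
    HasDirDeriv f x e L ↔ HasDirDeriv h x e L := by
  refine ⟨fun hfL => hfL.of_isLittleO_sub hx hfh, fun hhL => hhL.of_isLittleO_sub hx.symm ?_⟩
  simpa only [neg_sub] using hfh.neg_left

theorem stmt_12_general (d : ℕ) (x e : EuclideanSpace ℝ (Fin d))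
    (f h : EuclideanSpace ℝ (Fin d) → ℝ)
    (hf : ∃ K : NNReal, LipschitzWith K f) (hh : ∃ K : NNReal, LipschitzWith K h)
    (Δ : ℝ) (hΔ : 0 < Δ) (N : ℕ∞) (t1 t2 : ℕ → ℝ)
    (hpos : ∀ k : ℕ, (k : ℕ∞) < N → 0 < t1 k ∧ t1 k ≤ t2 k)
    (hshrink : N = ⊤ →
      Tendsto (fun k => (t2 k - t1 k) / t1 k) atTop (nhds 0))
    (hagree : ∀ t : ℝ,
      t ∈ (Set.Ico (0 : ℝ) Δ \ ⋃ k : ℕ, ⋃ _ : (k : ℕ∞) < N, Set.Ioo (t1 k) (t2 k)) ∪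
        (⋃ k : ℕ, ⋃ _ : (k : ℕ∞) < N, ({t1 k, t2 k} : Set ℝ)) →
      f (x + t • e) = h (x + t • e)) :
    ∀ L : ℝ, HasDirDeriv f x e L ↔ HasDirDeriv h x e L := by
  obtain ⟨Kf, hKf⟩ := hf
  obtain ⟨Kh, hKh⟩ := hh
  set g : ℝ → ℝ := fun t => f (x + t • e) - h (x + t • e)
  have hg : LipschitzWith _ g := (hKf.comp (lipschitzWith_const_add_smul x e)).sub
    (hKh.comp (lipschitzWith_const_add_smul x e))
  let ι := {k : ℕ // (k : ℕ∞) < N}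
  have hgap_zero : Ico 0 Δ \ ⋃ k : ι, Ioo (t1 k) (t2 k) ⊆ g ⁻¹' {0} := by
    rintro t ⟨htΔ, hgap⟩
    refine sub_eq_zero.2 (hagree t (Or.inl ⟨htΔ, ?_⟩))
    simp only [mem_iUnion, not_exists] at hgap ⊢
    exact fun k hk => hgap ⟨k, hk⟩
  have hleft_zero : ∀ k : ι, t1 k ∈ g ⁻¹' {0} := fun k =>
    sub_eq_zero.2 (hagree _ (Or.inr (mem_iUnion₂.2 ⟨k, k.2, Or.inl rfl⟩)))
  have hx : f x = h x := by
    have h0 : (0 : ℝ) ∉ ⋃ k : ℕ, ⋃ _ : (k : ℕ∞) < N, Ioo (t1 k) (t2 k) := by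
      simp only [mem_iUnion, not_exists]
      exact fun k hk hmem => hmem.1.not_gt (hpos k hk).1
    simpa using hagree 0 (Or.inl ⟨⟨le_rfl, hΔ⟩, h0⟩)
  have hzeros := eventually_exists_mem_near_of_shrinking_gaps hΔ (fun k : ι => (hpos k k.2).1)
    (tendsto_cofinite_of_lt_enat hshrink) hgap_zero hleft_zero
  exact fun L => hasDirDeriv_iff_of_isLittleO_sub hx (hg.isLittleO_id_of_near_zeros hzeros)

theorem stmt_12 (d : ℕ) (hd : 1 ≤ d) (x e : EuclideanSpace ℝ (Fin d)) (he : ‖e‖ = 1)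
    (f h : EuclideanSpace ℝ (Fin d) → ℝ)
    (hf : ∃ K : NNReal, LipschitzWith K f) (hh : ∃ K : NNReal, LipschitzWith K h)
    (Δ : ℝ) (hΔ : 0 < Δ) (N : ℕ∞) (t1 t2 : ℕ → ℝ)
    (hpos : ∀ k : ℕ, (k : ℕ∞) < N → 0 < t1 k ∧ t1 k ≤ t2 k)
    (hshrink : N = ⊤ →
      Tendsto (fun k => (t2 k - t1 k) / t1 k) atTop (nhds 0))
    (hagree : ∀ t : ℝ,
      t ∈ (Set.Ico (0 : ℝ) Δ \ ⋃ k : ℕ, ⋃ _ : (k : ℕ∞) < N, Set.Ioo (t1 k) (t2 k)) ∪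
        (⋃ k : ℕ, ⋃ _ : (k : ℕ∞) < N, ({t1 k, t2 k} : Set ℝ)) →
      f (x + t • e) = h (x + t • e)) :
    ∀ L : ℝ, HasDirDeriv f x e L ↔ HasDirDeriv h x e L :=
  stmt_12_general d x e f h hf hh Δ hΔ N t1 t2 hpos hshrink hagree
end
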